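/- arXiv:quant-ph/0502173 — 2 statements merged into one kernel-verified Lean document; each statement's English description precedes it below -/
import Mathlib

section
/- With λ : [0,T] → R^k integrable and γ = ∫₀ᵀ λ↓(t) dt (decreasing rearrangement applied pointwise), the set { ∫₀ᵀ μ(t) dt : μ(t) ≺ λ(t) pointwise } equals { β ∈ R^k : β ≺ γ }. -/
open scoped BigOperators

/-- The decreasing rearrangement of a vector in `ℝ^k`. -/
noncomputable def descSort {k : ℕ} (x : Fin k → ℝ) : Fin k → ℝ :=
  fun i => (x ∘ Tuple.sort x) i.rev

/-- Sum of the `m` largest entries of `x`, i.e. partial sum of the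
decreasing rearrangement. -/
noncomputable def partSum {k : ℕ} (x : Fin k → ℝ) (m : ℕ) : ℝ :=
  ∑ i : Fin k, if (i : ℕ) < m then descSort x i else 0

/-- `Majorized x y` means `x ≺ y`. -/
noncomputable def Majorized {k : ℕ} (x y : Fin k → ℝ) : Prop :=
  (∀ m : ℕ, m < k → partSum x m ≤ partSum y m) ∧ (∑ i, x i = ∑ i, y i)

/-!
If `μ(t) ≺ λ(t)`, then for any set `S` of `m` coordinates `∑_{i ∈ S} μᵢ(t)` is at most the sum of
the `m` largest entries of `λ(t)`, namely `∑_{i < m} λ↓ᵢ(t)`; integrating, and noting that `γ` is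
itself decreasing, gives `∫ μ ≺ γ`. Conversely, the vectors majorized by `γ` are exactly the convex
combinations `∑ w_σ (γ ∘ σ)` of its permutations (one inclusion by convexity, the other by
Hahn–Banach, the rearrangement inequality and Abel summation), and the selection
`μ(t) = ∑ w_σ (λ↓(t) ∘ σ)` is majorized by `λ(t)` and integrates to `∑ w_σ (γ ∘ σ)`.
-/

open Finset MeasureTheory

section Majorization

variable {k : ℕ}

noncomputable def descPerm (x : Fin k → ℝ) : Equiv.Perm (Fin k) :=
  Fin.revPerm.trans (Tuple.sort x)

theorem descSort_eq_comp (x : Fin k → ℝ) : descSort x = x ∘ descPerm x := rfl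

theorem antitone_descSort (x : Fin k → ℝ) : Antitone (descSort x) :=
  fun _ _ hij => Tuple.monotone_sort x (Fin.rev_anti hij)

theorem descSort_comp_perm (x : Fin k → ℝ) (σ : Equiv.Perm (Fin k)) :
    descSort (x ∘ σ) = descSort x := by
  funext i
  exact congrFun (Tuple.comp_perm_comp_sort_eq_comp_sort (f := x)) i.rev

theorem sum_descSort (x : Fin k → ℝ) : ∑ i, descSort x i = ∑ i, x i :=
  Equiv.sum_comp (descPerm x) x

theorem descSort_eq_self_of_antitone {x : Fin k → ℝ} (hx : Antitone x) : descSort x = x := by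
  have hmono : Monotone (x ∘ Fin.revPerm) := hx.comp Fin.rev_anti
  calc descSort x = descSort ((x ∘ Fin.revPerm) ∘ Fin.revPerm) := by
        congr 1; funext i; simp
    _ = x := by
        rw [descSort_comp_perm]
        funext i
        simp [descSort, Tuple.sort_eq_refl_iff_monotone.2 hmono]

theorem partSum_eq_sum_filter (x : Fin k → ℝ) (m : ℕ) :
    partSum x m = ∑ i : Fin k with i.val < m, descSort x i :=
  (sum_filter _ _).symm

theorem partSum_comp_perm (x : Fin k → ℝ) (σ : Equiv.Perm (Fin k)) (m : ℕ) :
    partSum (x ∘ σ) m = partSum x m := by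
  simp only [partSum, descSort_comp_perm]

theorem Finset.sum_le_sum_of_card_eq {ι M : Type*} [DecidableEq ι] [AddCommMonoid M]
    [LinearOrder M] [IsOrderedAddMonoid M] {s t : Finset ι} {f : ι → M} (hst : #s = #t)
    (h : ∀ i ∈ s \ t, ∀ j ∈ t \ s, f i ≤ f j) : ∑ i ∈ s, f i ≤ ∑ i ∈ t, f i := by
  have hcard : #(s \ t) = #(t \ s) := card_sdiff_comm hst
  have hsdiff : ∑ i ∈ s \ t, f i ≤ ∑ j ∈ t \ s, f j := by
    rcases (t \ s).eq_empty_or_nonempty with hts | hts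
    · have hst' : s \ t = ∅ := card_eq_zero.1 (by rw [hcard, hts, card_empty])
      simp [hst', hts]
    obtain ⟨j₀, hj₀, hmin⟩ := exists_min_image _ f hts
    calc ∑ i ∈ s \ t, f i ≤ #(s \ t) • f j₀ := sum_le_card_nsmul _ _ _ fun i hi => h i hi j₀ hj₀
      _ = #(t \ s) • f j₀ := by rw [hcard]
      _ ≤ ∑ j ∈ t \ s, f j := card_nsmul_le_sum _ _ _ hmin
  rw [← sum_inter_add_sum_sdiff s t, ← sum_inter_add_sum_sdiff t s, inter_comm]
  gcongr

theorem sum_le_partSum (x : Fin k → ℝ) (S : Finset (Fin k)) :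
    ∑ i ∈ S, x i ≤ partSum x #S := by
  have hS : #S ≤ k := by simpa using S.card_le_univ
  rw [partSum_eq_sum_filter]
  calc ∑ i ∈ S, x i = ∑ i ∈ S.map (descPerm x).symm.toEmbedding, descSort x i := by
        simp [descSort_eq_comp]
    _ ≤ ∑ i : Fin k with i.val < #S, descSort x i := by
        refine sum_le_sum_of_card_eq (by simp [Fin.card_filter_val_lt, hS]) fun i hi j hj => ?_
        simp only [mem_sdiff, mem_filter, mem_univ, true_and] at hi hj
        exact antitone_descSort x (Fin.le_def.2 (by omega))

theorem exists_sum_eq_partSum (x : Fin k → ℝ) {m : ℕ} (hm : m ≤ k) :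
    ∃ S : Finset (Fin k), #S = m ∧ ∑ i ∈ S, x i = partSum x m := by
  refine ⟨({i : Fin k | (i : ℕ) < m} : Finset (Fin k)).map (descPerm x).toEmbedding, ?_, ?_⟩
  · simp [Fin.card_filter_val_lt, hm]
  · simp [partSum_eq_sum_filter, descSort_eq_comp]

theorem majorized_iff {x y : Fin k → ℝ} :
    Majorized x y ↔ (∀ S : Finset (Fin k), #S < k → ∑ i ∈ S, x i ≤ partSum y #S) ∧
      ∑ i, x i = ∑ i, y i := by
  refine and_congr_left' ⟨fun h S hS => (sum_le_partSum x S).trans (h _ hS), fun h m hm => ?_⟩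
  obtain ⟨S, rfl, hS⟩ := exists_sum_eq_partSum x hm.le
  exact hS ▸ h S hm

theorem Majorized.trans {x y z : Fin k → ℝ} (hxy : Majorized x y) (hyz : Majorized y z) :
    Majorized x z :=
  ⟨fun m hm => (hxy.1 m hm).trans (hyz.1 m hm), hxy.2.trans hyz.2⟩

theorem majorized_comp_perm (x : Fin k → ℝ) (σ : Equiv.Perm (Fin k)) : Majorized (x ∘ σ) x :=
  ⟨fun m _ => (partSum_comp_perm x σ m).le, Equiv.sum_comp σ x⟩

theorem majorized_descSort (x : Fin k → ℝ) : Majorized (descSort x) x :=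
  majorized_comp_perm x (descPerm x)

theorem convex_setOf_majorized (y : Fin k → ℝ) : Convex ℝ {x | Majorized x y} := by
  intro x₁ h₁ x₂ h₂ a b ha hb hab
  simp only [Set.mem_ofPred_eq, majorized_iff] at h₁ h₂ ⊢
  have hcomb : ∀ S : Finset (Fin k), ∑ i ∈ S, (a • x₁ + b • x₂) i
      = a * ∑ i ∈ S, x₁ i + b * ∑ i ∈ S, x₂ i := fun S => by
    simp [sum_add_distrib, mul_sum]
  refine ⟨fun S hS => ?_, ?_⟩
  · calc ∑ i ∈ S, (a • x₁ + b • x₂) i ≤ a * partSum y #S + b * partSum y #S := by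
          rw [hcomb]; gcongr
          exacts [h₁.1 S hS, h₂.1 S hS]
      _ = partSum y #S := by rw [← add_mul, hab, one_mul]
  · rw [hcomb, h₁.2, h₂.2, ← add_mul, hab, one_mul]

theorem Antitone.mul_sum_range_le_sum_range_mul {a d : ℕ → ℝ} (ha : Antitone a) {n : ℕ}
    (hd : ∀ m ≤ n, 0 ≤ ∑ i ∈ range m, d i) :
    a n * ∑ i ∈ range n, d i ≤ ∑ i ∈ range n, a i * d i := by
  induction n with
  | zero => simp
  | succ n ih =>
    have ih := ih fun m hm => hd m (by omega)
    have hstep : a (n + 1) ≤ a n := ha n.le_succ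
    have hD := hd (n + 1) le_rfl
    rw [sum_range_succ] at hD ⊢
    rw [sum_range_succ]
    nlinarith

theorem Fin.sum_ite_val_lt_eq_sum_range {M : Type*} [AddCommMonoid M] {n m : ℕ} (hm : m ≤ n + 1)
    (g : Fin (n + 1) → M) :
    ∑ i : Fin (n + 1), (if (i : ℕ) < m then g i else 0) = ∑ j ∈ range m, g (Fin.clamp j n) := by
  rw [← sum_filter]
  refine sum_bij' (fun i _ => (i : ℕ)) (fun j _ => Fin.clamp j n) ?_ ?_ ?_ ?_ ?_ <;>
    simp only [mem_filter, mem_univ, true_and, mem_range, Fin.clamp, Fin.ext_iff] <;> intro i hi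
  · exact hi
  · omega
  · have := i.is_lt; omega
  · omega
  · congr 1; ext; have := i.is_lt; simp only; omega

theorem Antitone.sum_mul_le_sum_mul_of_prefix_sum_le {a u v : Fin k → ℝ} (ha : Antitone a)
    (h : ∀ m < k, ∑ i : Fin k, (if (i : ℕ) < m then u i else 0) ≤
      ∑ i : Fin k, if (i : ℕ) < m then v i else 0)
    (hsum : ∑ i, u i = ∑ i, v i) :
    ∑ i, a i * u i ≤ ∑ i, a i * v i := by
  cases k with
  | zero => simp
  | succ n =>
    set d : ℕ → ℝ := fun j => v (Fin.clamp j n) - u (Fin.clamp j n)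
    have hpartial : ∀ m ≤ n + 1, ∑ j ∈ range m, d j =
        (∑ i : Fin (n + 1), if (i : ℕ) < m then v i else 0) -
          ∑ i : Fin (n + 1), if (i : ℕ) < m then u i else 0 := by
      intro m hm
      rw [Fin.sum_ite_val_lt_eq_sum_range hm, Fin.sum_ite_val_lt_eq_sum_range hm, ← sum_sub_distrib]
    have hall : ∀ w : Fin (n + 1) → ℝ, (∑ i : Fin (n + 1), if (i : ℕ) < n + 1 then w i else 0)
        = ∑ i, w i := fun w => sum_congr rfl fun i _ => if_pos i.is_lt
    have hd : ∀ m ≤ n + 1, 0 ≤ ∑ j ∈ range m, d j := by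
      intro m hm
      rw [hpartial m hm, sub_nonneg]
      rcases hm.lt_or_eq with hm | rfl
      · exact h m hm
      · rw [hall, hall, hsum]
    have habel := (ha.comp_monotone Fin.clamp_monotone).mul_sum_range_le_sum_range_mul hd
    have htotal : ∑ j ∈ range (n + 1), d j = 0 := by
      rw [hpartial _ le_rfl, hall, hall, hsum, sub_self]
    have hdiff : ∑ i, a i * v i - ∑ i, a i * u i
        = ∑ j ∈ range (n + 1), (a ∘ fun j => Fin.clamp j n) j * d j := by
      rw [← sum_sub_distrib, ← hall, Fin.sum_ite_val_lt_eq_sum_range le_rfl]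
      simp [d, mul_sub]
    rw [htotal, mul_zero] at habel
    linarith

theorem Majorized.sum_mul_descSort_le {x y a : Fin k → ℝ} (h : Majorized x y) (ha : Antitone a) :
    ∑ i, a i * descSort x i ≤ ∑ i, a i * descSort y i :=
  ha.sum_mul_le_sum_mul_of_prefix_sum_le h.1 (by rw [sum_descSort, sum_descSort, h.2])

theorem sum_mul_le_sum_descSort_mul_descSort (c x : Fin k → ℝ) :
    ∑ i, c i * x i ≤ ∑ i, descSort c i * descSort x i := by
  have hcx : ∑ i, c i * x i
      = ∑ i, descSort c i * descSort x (((descPerm c).trans (descPerm x).symm) i) := by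
    rw [← Equiv.sum_comp (descPerm c)]
    simp [descSort_eq_comp]
  rw [hcx]
  exact ((antitone_descSort c).monovary (antitone_descSort x)).sum_mul_comp_perm_le_sum_mul

theorem mem_convexHull_of_majorized {x y : Fin k → ℝ} (h : Majorized x y) :
    x ∈ convexHull ℝ (Set.range fun σ : Equiv.Perm (Fin k) => y ∘ σ) := by
  by_contra hx
  obtain ⟨f, u, hf, hfx⟩ := geometric_hahn_banach_closed_point (convex_convexHull ℝ _)
    ((Set.finite_range _).isCompact_convexHull (𝕜 := ℝ)).isClosed hx
  set c : Fin k → ℝ := fun i => f fun j => if i = j then 1 else 0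
  have hf_apply : ∀ z, f z = ∑ i, c i * z i := fun z => by
    simpa [mul_comm] using f.toLinearMap.pi_apply_eq_sum_univ z
  -- the permutation of `y` that is ordered like `c`
  set σ := (descPerm c).symm.trans (descPerm y)
  have hσ : ∑ i, descSort c i * descSort y i = ∑ i, c i * (y ∘ σ) i := by
    conv_rhs => rw [← Equiv.sum_comp (descPerm c)]
    simp [σ, descSort_eq_comp]
  have hle : f x ≤ f (y ∘ σ) := by
    rw [hf_apply, hf_apply, ← hσ]
    exact (sum_mul_le_sum_descSort_mul_descSort c x).trans
      (h.sum_mul_descSort_le (antitone_descSort c))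
  have := hf _ (subset_convexHull ℝ _ ⟨σ, rfl⟩)
  linarith

theorem majorized_iff_mem_convexHull {x y : Fin k → ℝ} :
    Majorized x y ↔ x ∈ convexHull ℝ (Set.range fun σ : Equiv.Perm (Fin k) => y ∘ σ) :=
  ⟨mem_convexHull_of_majorized, fun hx => convexHull_min
    (Set.range_subset_iff.2 (majorized_comp_perm y)) (convex_setOf_majorized y) hx⟩

theorem majorized_integral_descSort {α : Type*} [MeasurableSpace α] {ρ : Measure α}
    {μ ν : α → Fin k → ℝ} (hμ : ∀ i, Integrable (fun t => μ t i) ρ)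
    (hν : ∀ i, Integrable (fun t => descSort (ν t) i) ρ) (h : ∀ᵐ t ∂ρ, Majorized (μ t) (ν t)) :
    Majorized (fun i => ∫ t, μ t i ∂ρ) (fun i => ∫ t, descSort (ν t) i ∂ρ) := by
  have hanti : Antitone fun i => ∫ t, descSort (ν t) i ∂ρ := fun i j hij =>
    integral_mono (hν j) (hν i) fun t => antitone_descSort (ν t) hij
  refine majorized_iff.2 ⟨fun S hS => ?_, ?_⟩
  · rw [partSum_eq_sum_filter, descSort_eq_self_of_antitone hanti,
      ← integral_finsetSum _ fun i _ => hμ i, ← integral_finsetSum _ fun i _ => hν i]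
    refine integral_mono_ae (integrable_finsetSum _ fun i _ => hμ i)
      (integrable_finsetSum _ fun i _ => hν i) ?_
    filter_upwards [h] with t ht
    calc ∑ i ∈ S, μ t i ≤ partSum (μ t) #S := sum_le_partSum _ _
      _ ≤ partSum (ν t) #S := ht.1 _ hS
      _ = _ := partSum_eq_sum_filter _ _
  · rw [← integral_finsetSum _ fun i _ => hμ i, ← integral_finsetSum _ fun i _ => hν i]
    refine integral_congr_ae ?_
    filter_upwards [h] with t ht
    simp only [ht.2, sum_descSort]

theorem exists_majorized_integral_eq {α : Type*} [MeasurableSpace α] {ρ : Measure α}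
    {ν : α → Fin k → ℝ} (hν : ∀ i, Integrable (fun t => descSort (ν t) i) ρ) {β : Fin k → ℝ}
    (hβ : Majorized β fun i => ∫ t, descSort (ν t) i ∂ρ) :
    ∃ μ : α → Fin k → ℝ, (∀ i, Integrable (fun t => μ t i) ρ) ∧
      (∀ t, Majorized (μ t) (ν t)) ∧ β = fun i => ∫ t, μ t i ∂ρ := by
  obtain ⟨s, w, hw₀, hw₁, hβ⟩ := (convexHull_range_eq_exists_affineCombination _).le
    (majorized_iff_mem_convexHull.1 hβ)
  have hint : ∀ i, ∀ σ ∈ s, Integrable (fun t => w σ * descSort (ν t) (σ i)) ρ :=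
    fun i σ _ => (hν (σ i)).const_mul (w σ)
  refine ⟨fun t => ∑ σ ∈ s, w σ • (descSort (ν t) ∘ σ), fun i => ?_, fun t => ?_, ?_⟩
  · simpa using integrable_finsetSum s (hint i)
  · beta_reduce
    refine (majorized_iff_mem_convexHull.2 ?_).trans (majorized_descSort (ν t))
    rw [← affineCombination_eq_linear_combination _ _ _ hw₁]
    exact affineCombination_mem_convexHull hw₀ hw₁
  · rw [← hβ, affineCombination_eq_linear_combination _ _ _ hw₁]
    funext i
    simp only [Finset.sum_apply, Pi.smul_apply, Function.comp_apply, smul_eq_mul]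
    rw [integral_finsetSum s (hint i)]
    simp only [integral_const_mul]

end Majorization

open MeasureTheory intervalIntegral

theorem integral_majorized_set_eq_general {k : ℕ} (T : ℝ) (hT : 0 ≤ T)
    (l : ℝ → Fin k → ℝ)
    (hld : ∀ i, IntervalIntegrable (fun t => descSort (l t) i) volume 0 T) :
    {β : Fin k → ℝ | ∃ μ : ℝ → Fin k → ℝ,
      (∀ i, IntervalIntegrable (fun t => μ t i) volume 0 T) ∧
      (∀ t ∈ Set.Icc (0 : ℝ) T, Majorized (μ t) (l t)) ∧
      β = fun i => ∫ t in (0 : ℝ)..T, μ t i}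
    = {β : Fin k → ℝ |
        Majorized β (fun i => ∫ t in (0 : ℝ)..T, descSort (l t) i)} := by
  ext β
  simp only [Set.mem_ofPred_eq, integral_of_le hT]
  constructor
  · rintro ⟨μ, hμ, hmaj, rfl⟩
    exact majorized_integral_descSort (fun i => (hμ i).1) (fun i => (hld i).1)
      (ae_restrict_of_forall_mem measurableSet_Ioc fun t ht => hmaj t (Set.Ioc_subset_Icc_self ht))
  · intro hβ
    obtain ⟨μ, hμ, hmaj, rfl⟩ := exists_majorized_integral_eq (fun i => (hld i).1) hβ
    exact ⟨μ, fun i => (intervalIntegrable_iff_integrableOn_Ioc_of_le hT).2 (hμ i),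
      fun t _ => hmaj t, rfl⟩

/-- With `γ = ∫₀ᵀ λ↓(t) dt`, the set of entrywise integrals of integrable
selections `μ(t) ≺ λ(t)` equals the set of vectors majorized by `γ`. -/
theorem integral_majorized_set_eq {k : ℕ} (T : ℝ) (hT : 0 ≤ T)
    (l : ℝ → Fin k → ℝ)
    (hl : ∀ i, IntervalIntegrable (fun t => l t i) volume 0 T)
    (hld : ∀ i, IntervalIntegrable (fun t => descSort (l t) i) volume 0 T) :
    {β : Fin k → ℝ | ∃ μ : ℝ → Fin k → ℝ,
      (∀ i, IntervalIntegrable (fun t => μ t i) volume 0 T) ∧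
      (∀ t ∈ Set.Icc (0 : ℝ) T, Majorized (μ t) (l t)) ∧
      β = fun i => ∫ t in (0 : ℝ)..T, μ t i}
    = {β : Fin k → ℝ |
        Majorized β (fun i => ∫ t in (0 : ℝ)..T, descSort (l t) i)} :=
  integral_majorized_set_eq_general T hT l hld
end

section
/- Let θ^U ∈ R^3 satisfy π/4 ≥ θ₁ ≥ θ₂ ≥ |θ₃| and let n ∈ Z^3 have some component with |n_j| > 1. Then θ^U ≺_s s(θ^U + (π/2)n), where s(v) denotes the s-ordered version of v (entries rearranged so |v|-entries decrease, with sign of the product placed on the last entry). -/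
open scoped BigOperators

/-- The s-ordered version of a vector in `ℝ³`. -/
noncomputable def sOrder (v : Fin 3 → ℝ) : Fin 3 → ℝ :=
  ![descSort (fun i => |v i|) 0, descSort (fun i => |v i|) 1,
    Real.sign (v 0 * v 1 * v 2) * descSort (fun i => |v i|) 2]

/-- `SMajorized x y` means `x ≺ₛ y` (s-majorization on `ℝ³`). -/
noncomputable def SMajorized (x y : Fin 3 → ℝ) : Prop :=
  sOrder x 0 ≤ sOrder y 0 ∧
  sOrder x 0 + sOrder x 1 + sOrder x 2 ≤ sOrder y 0 + sOrder y 1 + sOrder y 2 ∧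
  sOrder x 0 + sOrder x 1 - sOrder x 2 ≤ sOrder y 0 + sOrder y 1 - sOrder y 2

lemma descSort_antitone {k : ℕ} (x : Fin k → ℝ) : Antitone (descSort x) :=
  fun _ _ h => Tuple.monotone_sort x (Fin.rev_le_rev.mpr h)

lemma exists_descSort_eq {k : ℕ} (x : Fin k → ℝ) (i : Fin k) :
    ∃ j, descSort x i = x j := ⟨Tuple.sort x i.rev, rfl⟩

lemma le_descSort_zero {k : ℕ} (x : Fin (k+1) → ℝ) (i : Fin (k+1)) :
    x i ≤ descSort x 0 := by
  have h := Tuple.monotone_sort x (Fin.le_last ((Tuple.sort x)⁻¹ i))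
  simpa [descSort, Fin.rev_zero, Equiv.apply_symm_apply] using h

lemma abs_real_sign_le_one (r : ℝ) : |Real.sign r| ≤ 1 := by
  rcases Real.sign_apply_eq r with h | h | h <;> rw [h] <;> norm_num

open Real in
/-- If `π/4 ≥ θ₁ ≥ θ₂ ≥ |θ₃|` and some component of `n ∈ ℤ³` has `|n_j| > 1`,
then `θ ≺ₛ θ + (π/2)n`. -/
theorem sMajorized_shift_of_large_component (θ : Fin 3 → ℝ) (n : Fin 3 → ℤ)
    (hθ : θ 0 ≤ π / 4 ∧ θ 1 ≤ θ 0 ∧ |θ 2| ≤ θ 1)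
    (hn : ∃ j, 1 < |n j|) :
    SMajorized θ (fun i => θ i + (π / 2) * (n i : ℝ)) := by
  obtain ⟨hθ0, hθ10, hθ2⟩ := hθ
  obtain ⟨j, hj⟩ := hn
  have hπ := Real.pi_pos
  set y : Fin 3 → ℝ := fun i => θ i + (π / 2) * (n i : ℝ) with hy
  have hθ1n : 0 ≤ θ 1 := le_trans (abs_nonneg _) hθ2
  have habs : ∀ i, |θ i| ≤ π / 4 := by
    intro i; fin_cases i
    · show |θ 0| ≤ π / 4
      rw [abs_of_nonneg (le_trans hθ1n hθ10)]; exact hθ0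
    · show |θ 1| ≤ π / 4
      rw [abs_of_nonneg hθ1n]; linarith
    · show |θ 2| ≤ π / 4
      linarith
  set A : Fin 3 → ℝ := fun i => |θ i| with hA
  set B : Fin 3 → ℝ := fun i => |y i| with hB
  -- facts about A
  obtain ⟨j0, hj0⟩ := exists_descSort_eq A 0
  have ha0 : descSort A 0 ≤ π / 4 := hj0 ▸ habs j0
  have ha10 : descSort A 1 ≤ descSort A 0 := descSort_antitone A (by decide)
  have ha21 : descSort A 2 ≤ descSort A 1 := descSort_antitone A (by decide)
  obtain ⟨j2, hj2⟩ := exists_descSort_eq A 2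
  have ha2n : 0 ≤ descSort A 2 := hj2 ▸ abs_nonneg _
  -- facts about B
  have hnj : (2 : ℝ) ≤ |(n j : ℝ)| := by
    have h2 : (2 : ℤ) ≤ |n j| := hj
    calc (2 : ℝ) = ((2 : ℤ) : ℝ) := by norm_num
    _ ≤ ((|n j| : ℤ) : ℝ) := by exact_mod_cast h2
    _ = |(n j : ℝ)| := by push_cast; ring
  have hyj : 3 * π / 4 ≤ |y j| := by
    have key : |(π / 2) * (n j : ℝ)| ≤ |y j| + |θ j| := by
      calc |(π / 2) * (n j : ℝ)| = |y j + (-(θ j))| := by rw [hy]; ring_nf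
      _ ≤ |y j| + |(-(θ j))| := abs_add_le _ _
      _ = |y j| + |θ j| := by rw [abs_neg]
    have habsc : |(π / 2) * (n j : ℝ)| = (π / 2) * |(n j : ℝ)| := by
      rw [abs_mul, abs_of_pos (by positivity)]
    have hp : π ≤ (π / 2) * |(n j : ℝ)| := by nlinarith
    have := habs j
    linarith [key, habsc ▸ key]
  have hb0 : 3 * π / 4 ≤ descSort B 0 := le_trans hyj (le_descSort_zero B j)
  have hb10 : descSort B 1 ≤ descSort B 0 := descSort_antitone B (by decide)
  have hb21 : descSort B 2 ≤ descSort B 1 := descSort_antitone B (by decide)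
  obtain ⟨j2', hj2'⟩ := exists_descSort_eq B 2
  have hb2n : 0 ≤ descSort B 2 := hj2' ▸ abs_nonneg _
  obtain ⟨j1', hj1'⟩ := exists_descSort_eq B 1
  have hb1n : 0 ≤ descSort B 1 := hj1' ▸ abs_nonneg _
  -- sign bounds
  have hsθ := abs_le.mp (abs_real_sign_le_one (θ 0 * θ 1 * θ 2))
  have hsy := abs_le.mp (abs_real_sign_le_one (y 0 * y 1 * y 2))
  have hsθ2 : Real.sign (θ 0 * θ 1 * θ 2) * descSort A 2 ≤ descSort A 2 ∧
      -descSort A 2 ≤ Real.sign (θ 0 * θ 1 * θ 2) * descSort A 2 := by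
    constructor <;> nlinarith [hsθ.1, hsθ.2, ha2n]
  have hsy2 : Real.sign (y 0 * y 1 * y 2) * descSort B 2 ≤ descSort B 2 ∧
      -descSort B 2 ≤ Real.sign (y 0 * y 1 * y 2) * descSort B 2 := by
    constructor <;> nlinarith [hsy.1, hsy.2, hb2n]
  refine ⟨?_, ?_, ?_⟩ <;>
    simp only [sOrder, Matrix.cons_val_zero, Matrix.cons_val_one, Matrix.head_cons,
      Matrix.cons_val_two, Matrix.tail_cons, ← hA, ← hB, ← hy] <;>
    linarith [hsθ2.1, hsθ2.2, hsy2.1, hsy2.2]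
end
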